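/- Finite de Finetti theorem: let X_1,...,X_n be exchangeable random variables with values in a finite alphabet A of size m, with n a multiple of k, 2 ≤ k ≤ (n/100)^{1/3}. Let μ be the law of the empirical measure P̂_{X_1^n} on the simplex, P_k the law of (X_1,...,X_k), and M_{μ,k}(x_1^k) = ∫ Q^k(x_1^k) dμ(Q). Then D(P_k‖M_{μ,k}) ≤ 2δ + k e^{−(n/k)δ} (n/k + 1)^{2m^k} log n, where α = [2k/√n · ((1+2k)/√n + 1)]^{1/2} and δ = α log(m^k/α). -/

import Mathlib

open scoped Classical BigOperators

/-- The empirical PMF (type) of a string `x ∈ A^n`. -/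
noncomputable def empPMF {A : Type*} [Fintype A] (n : ℕ) (x : Fin n → A) (a : A) : ℝ :=
  ((Finset.univ.filter (fun i : Fin n => x i = a)).card : ℝ) / n

/-- Relative entropy (natural log), finite-sum form. -/
noncomputable def relEnt {B : Type*} [Fintype B] (P Q : B → ℝ) : ℝ :=
  ∑ b, P b * Real.log (P b / Q b)

/-!
Reading `k` coordinates of an exchangeable string amounts to sampling its type without
replacement, while `M_{μ,k}` samples the type with replacement. Averaging over all injections
`Fin k ↪ Fin n`, exchangeability gives `n.descFactorial k * P_k ≤ n ^ k * M_{μ,k}` pointwise, so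
`D(P_k‖M_{μ,k}) ≤ log (n ^ k / n.descFactorial k) ≤ k (k - 1) / (n + 1 - k)`. Under
`100 k³ ≤ n` this is at most `α`, and `α ≤ 2δ` because `α ≤ 1/2`; the remaining term of the
bound is nonnegative.
-/

open Finset Function

section Counting

variable {α A : Type*} [Fintype α] {k : ℕ}

theorem card_embedding_filter_comp_le [DecidableEq α] (x : α → A) (b : Fin k → A) :
    #{v : Fin k ↪ α | ∀ i, x (v i) = b i} ≤ ∏ i, #{j | x j = b i} := by
  rw [← Fintype.card_piFinset]
  refine Finset.card_le_card_of_injOn (fun v => ⇑v) (fun v hv => ?_)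
    (fun v _ w _ h => DFunLike.coe_injective h)
  simpa [Fintype.mem_piFinset] using hv

variable [DecidableEq α] [Fintype A] {p : (α → A) → ℝ}

theorem sum_sum_ite_comp (w : Fin k → α) :
    (∑ b : Fin k → A, ∑ x, if ∀ i, x (w i) = b i then p x else 0) = ∑ x, p x := by
  rw [Finset.sum_comm]
  refine Finset.sum_congr rfl fun x _ => ?_
  simp_rw [← funext_iff]
  simp

theorem sum_ite_comp_eq_of_perm_invariant (hp : ∀ (π : Equiv.Perm α) x, p (x ∘ π) = p x)
    {v w : Fin k → α} (hv : Injective v) (hw : Injective w) (b : Fin k → A) :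
    (∑ x, if ∀ i, x (v i) = b i then p x else 0) = ∑ x, if ∀ i, x (w i) = b i then p x else 0 := by
  obtain ⟨σ, hσ⟩ := Equiv.Perm.exists_extending_pair v w hv hw
  refine ((Equiv.arrowCongr σ.symm (Equiv.refl A)).sum_comp _).symm.trans
    (Finset.sum_congr rfl fun x _ => ?_)
  have hx : Equiv.arrowCongr σ.symm (Equiv.refl A) x = x ∘ σ := rfl
  simp only [hx, comp_apply, hσ, hp]

theorem card_embedding_mul_sum_ite_comp (hp : ∀ (π : Equiv.Perm α) x, p (x ∘ π) = p x)
    {w : Fin k → α} (hw : Injective w) (b : Fin k → A) :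
    (Fintype.card (Fin k ↪ α) : ℝ) * (∑ x, if ∀ i, x (w i) = b i then p x else 0)
      = ∑ x, p x * #{v : Fin k ↪ α | ∀ i, x (v i) = b i} := by
  calc (Fintype.card (Fin k ↪ α) : ℝ) * (∑ x, if ∀ i, x (w i) = b i then p x else 0)
      = ∑ v : Fin k ↪ α, ∑ x, if ∀ i, x (v i) = b i then p x else 0 := by
        rw [Finset.sum_congr rfl fun v _ => sum_ite_comp_eq_of_perm_invariant hp v.injective hw b,
          Finset.sum_const, Finset.card_univ, nsmul_eq_mul]
    _ = ∑ x, p x * #{v : Fin k ↪ α | ∀ i, x (v i) = b i} := by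
        rw [Finset.sum_comm]
        refine Finset.sum_congr rfl fun x _ => ?_
        rw [← Finset.sum_filter, Finset.sum_const, nsmul_eq_mul, mul_comm]

end Counting

theorem prod_empPMF {β A : Type*} [Fintype β] [Fintype A] {n : ℕ} (x : Fin n → A) (b : β → A) :
    ∏ i, empPMF n x (b i) = (∏ i, (#{j | x j = b i} : ℝ)) / n ^ Fintype.card β := by
  simp [empPMF, Finset.prod_div_distrib]

theorem descFactorial_mul_sum_ite_le {A : Type*} [Fintype A] {n k : ℕ} (hkn : k ≤ n)
    {p : (Fin n → A) → ℝ} (hp0 : ∀ x, 0 ≤ p x)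
    (hp : ∀ (π : Equiv.Perm (Fin n)) x, p (x ∘ π) = p x) (b : Fin k → A) :
    (n.descFactorial k : ℝ) * (∑ x, if ∀ i, x (Fin.castLE hkn i) = b i then p x else 0)
      ≤ n ^ k * ∑ x, p x * ∏ i, empPMF n x (b i) := by
  have hnk : (n : ℝ) ^ k ≠ 0 := by
    exact_mod_cast ((Nat.descFactorial_pos.2 hkn).trans_le (Nat.descFactorial_le_pow n k)).ne'
  calc (n.descFactorial k : ℝ) * (∑ x, if ∀ i, x (Fin.castLE hkn i) = b i then p x else 0)
      = ∑ x, p x * #{v : Fin k ↪ Fin n | ∀ i, x (v i) = b i} := by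
        rw [← card_embedding_mul_sum_ite_comp hp (Fin.castLE_injective hkn),
          Fintype.card_embedding_eq, Fintype.card_fin, Fintype.card_fin]
    _ ≤ ∑ x, p x * ∏ i, (#{j | x j = b i} : ℝ) := by
        gcongr with x
        · exact hp0 x
        · exact_mod_cast card_embedding_filter_comp_le x b
    _ = n ^ k * ∑ x, p x * ∏ i, empPMF n x (b i) := by
        simp only [prod_empPMF, Fintype.card_fin, Finset.mul_sum]
        refine Finset.sum_congr rfl fun x _ => ?_
        field_simp

theorem relEnt_le_log_of_le_mul {B : Type*} [Fintype B] {P M : B → ℝ} {C : ℝ} (hC : 0 < C)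
    (hP0 : ∀ b, 0 ≤ P b) (hP1 : ∑ b, P b = 1) (hPM : ∀ b, P b ≤ C * M b) :
    relEnt P M ≤ Real.log C := by
  have hterm : ∀ b, P b * Real.log (P b / M b) ≤ P b * Real.log C := by
    intro b
    rcases (hP0 b).eq_or_lt with hb | hb
    · simp [← hb]
    have hMb : 0 < M b := pos_of_mul_pos_right (hb.trans_le (hPM b)) hC.le
    gcongr
    exact (div_le_iff₀ hMb).2 (hPM b)
  calc relEnt P M ≤ ∑ b, P b * Real.log C := Finset.sum_le_sum fun b _ => hterm b
    _ = Real.log C := by rw [← Finset.sum_mul, hP1, one_mul]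

theorem log_pow_div_descFactorial_le {n k : ℕ} (hkn : k ≤ n) :
    Real.log (n ^ k / n.descFactorial k) ≤ k * (k - 1) / (n + 1 - k) := by
  rcases Nat.eq_zero_or_pos k with rfl | hk
  · simp
  have hr : (0 : ℝ) < n + 1 - k := by
    have : (k : ℝ) ≤ n := by exact_mod_cast hkn
    linarith
  have hn : (0 : ℝ) < n := by exact_mod_cast hk.trans_le hkn
  have hdesc : ((n + 1 - k : ℝ)) ^ k ≤ n.descFactorial k := by
    have := Nat.pow_sub_le_descFactorial n k
    rw [← Nat.cast_le (α := ℝ)] at this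
    push_cast [Nat.cast_sub (by omega : k ≤ n + 1)] at this
    exact this
  calc Real.log (n ^ k / n.descFactorial k)
      ≤ Real.log ((n / (n + 1 - k)) ^ k) := by
        have : (0 : ℝ) < n.descFactorial k := by exact_mod_cast Nat.descFactorial_pos.2 hkn
        rw [div_pow]
        gcongr
    _ = k * Real.log (n / (n + 1 - k)) := Real.log_pow _ _
    _ ≤ k * (n / (n + 1 - k) - 1) := by
        gcongr
        exact Real.log_le_sub_one_of_pos (by positivity)
    _ = k * (k - 1) / (n + 1 - k) := by
        field_simp
        ring

theorem relEnt_marginal_le_log_pow_div_descFactorial {A : Type*} [Fintype A] {n k : ℕ}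
    (hkn : k ≤ n) {p : (Fin n → A) → ℝ} (hp0 : ∀ x, 0 ≤ p x) (hp1 : ∑ x, p x = 1)
    (hp : ∀ (π : Equiv.Perm (Fin n)) x, p (x ∘ π) = p x) :
    relEnt (fun a : Fin k → A => ∑ x, if ∀ i, x (Fin.castLE hkn i) = a i then p x else 0)
      (fun a => ∑ x, p x * ∏ i, empPMF n x (a i))
      ≤ Real.log (n ^ k / n.descFactorial k) := by
  have hdesc : (0 : ℕ) < n.descFactorial k := Nat.descFactorial_pos.2 hkn
  have hpow : (0 : ℝ) < (n : ℝ) ^ k := by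
    exact_mod_cast hdesc.trans_le (Nat.descFactorial_le_pow n k)
  refine relEnt_le_log_of_le_mul (by positivity)
    (fun a => Finset.sum_nonneg fun x _ => by split_ifs <;> simp [hp0])
    ((sum_sum_ite_comp _).trans hp1) fun a => ?_
  rw [div_mul_eq_mul_div, le_div_iff₀ (by exact_mod_cast hdesc), mul_comm]
  exact descFactorial_mul_sum_ite_le hkn hp0 hp a

noncomputable def deFinettiAlpha (k n : ℝ) : ℝ := √(2 * k / √n * ((1 + 2 * k) / √n + 1))

section Alpha

variable {K N : ℝ}

theorem deFinettiAlpha_pos (hK : 0 < K) (hN : 0 < N) : 0 < deFinettiAlpha K N := by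
  unfold deFinettiAlpha
  positivity

theorem mul_sub_one_div_le_deFinettiAlpha (hK : 1 ≤ K) (hKN : 100 * K ^ 3 ≤ N) :
    K * (K - 1) / (N + 1 - K) ≤ deFinettiAlpha K N := by
  have hK3 : K ≤ K ^ 3 := le_self_pow₀ hK (by norm_num)
  have hN : 1 ≤ N := by nlinarith
  have hsqrtN : √N ≤ N := Real.sqrt_le_left (by positivity) |>.mpr (by nlinarith)
  have hr : N / 2 ≤ N + 1 - K := by linarith
  calc K * (K - 1) / (N + 1 - K) ≤ √(2 * K / √N) := by
        refine Real.le_sqrt_of_sq_le ?_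
        rw [div_pow, div_le_div_iff₀ (by nlinarith) (by positivity)]
        calc (K * (K - 1)) ^ 2 * √N ≤ K * K ^ 3 * N := by
              gcongr
              nlinarith
          _ ≤ K * (N / 100) * N := by gcongr; linarith
          _ ≤ 2 * K * (N / 2) ^ 2 := by nlinarith
          _ ≤ 2 * K * (N + 1 - K) ^ 2 := by gcongr
    _ ≤ deFinettiAlpha K N := by
        unfold deFinettiAlpha
        gcongr
        refine le_mul_of_one_le_right (by positivity) ?_
        have : 0 ≤ (1 + 2 * K) / √N := by positivity
        linarith

theorem deFinettiAlpha_le_half (hK : 2 ≤ K) (hKN : 100 * K ^ 3 ≤ N) :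
    deFinettiAlpha K N ≤ 1 / 2 := by
  have hsqrtN : 14 * K ≤ √N := Real.le_sqrt_of_sq_le (by nlinarith)
  have hsqrtN0 : 0 < √N := by linarith
  have h1 : 2 * K / √N ≤ 1 / 7 := by
    rw [div_le_iff₀ hsqrtN0]; linarith
  have h2 : (1 + 2 * K) / √N ≤ 3 / 14 := by
    rw [div_le_iff₀ hsqrtN0]; linarith
  have h3 : 2 * K / √N * ((1 + 2 * K) / √N + 1) ≤ (1 / 2) ^ 2 := by
    calc 2 * K / √N * ((1 + 2 * K) / √N + 1) ≤ 1 / 7 * (3 / 14 + 1) := by gcongr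
      _ ≤ (1 / 2) ^ 2 := by norm_num
  exact Real.sqrt_le_left (by positivity) |>.mpr h3

end Alpha

theorem le_two_mul_mul_log_div {a c : ℝ} (ha : 0 < a) (ha2 : a ≤ 1 / 2) (hc : 1 ≤ c) :
    a ≤ 2 * (a * Real.log (c / a)) := by
  have h2 : 2 ≤ c / a := by rw [le_div_iff₀ ha]; linarith
  have hlog : 1 / 2 ≤ Real.log (c / a) :=
    calc (1 / 2 : ℝ) ≤ Real.log 2 := by linarith [Real.log_two_gt_d9]
      _ ≤ Real.log (c / a) := Real.log_le_log (by norm_num) h2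
  nlinarith

theorem finite_de_finetti_general {A : Type*} [Fintype A]
    (n k : ℕ) (hk2 : 2 ≤ k) (hkn : k ≤ n)
    (hk3 : (k : ℝ) ≤ ((n : ℝ) / 100) ^ ((1 : ℝ) / 3))
    (p : (Fin n → A) → ℝ) (hp0 : ∀ x, 0 ≤ p x) (hp1 : (∑ x, p x) = 1)
    (hexch : ∀ (π : Equiv.Perm (Fin n)) (x : Fin n → A), p (x ∘ π) = p x)
    (α δ : ℝ)
    (hα : α = Real.sqrt (2 * k / Real.sqrt n * ((1 + 2 * k) / Real.sqrt n + 1)))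
    (hδ : δ = α * Real.log ((Fintype.card A : ℝ) ^ k / α)) :
    relEnt
      (fun a : Fin k → A => ∑ x, if (∀ i : Fin k, x (Fin.castLE hkn i) = a i) then p x else 0)
      (fun a : Fin k → A => ∑ x, p x * ∏ i : Fin k, empPMF n x (a i))
      ≤ 2 * δ + k * Real.exp (-((n : ℝ) / k) * δ) *
          ((n : ℝ) / k + 1) ^ (2 * Fintype.card A ^ k) * Real.log n := by
  have hK : (2 : ℝ) ≤ k := by exact_mod_cast hk2
  have hKN : 100 * (k : ℝ) ^ 3 ≤ n := by
    rw [one_div, Real.le_rpow_inv_iff_of_pos (by positivity) (by positivity) (by norm_num),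
      show (3 : ℝ) = (3 : ℕ) by norm_num, Real.rpow_natCast] at hk3
    linarith
  have hn : (0 : ℝ) < n := by linarith [pow_pos (by positivity : (0 : ℝ) < k) 3]
  have hcard : (1 : ℝ) ≤ (Fintype.card A : ℝ) ^ k := by
    obtain ⟨a, -, -⟩ := Finset.exists_ne_zero_of_sum_ne_zero
      (((sum_sum_ite_comp (Fin.castLE hkn)).trans hp1).trans_ne one_ne_zero)
    have : 0 < Fintype.card A ^ k := by simpa using Fintype.card_pos_iff.2 ⟨a⟩
    exact_mod_cast this
  obtain rfl : α = deFinettiAlpha k n := hα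
  subst hδ
  calc relEnt _ _ ≤ Real.log (n ^ k / n.descFactorial k) :=
        relEnt_marginal_le_log_pow_div_descFactorial hkn hp0 hp1 hexch
    _ ≤ k * (k - 1) / (n + 1 - k) := log_pow_div_descFactorial_le hkn
    _ ≤ deFinettiAlpha k n := mul_sub_one_div_le_deFinettiAlpha (by linarith) hKN
    _ ≤ 2 * (deFinettiAlpha k n * Real.log ((Fintype.card A : ℝ) ^ k / deFinettiAlpha k n)) :=
        le_two_mul_mul_log_div (deFinettiAlpha_pos (by positivity) hn)
          (deFinettiAlpha_le_half hK hKN) hcard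
    _ ≤ _ := le_add_of_nonneg_right (by positivity)

/-- finite de Finetti theorem: for exchangeable `X_1,…,X_n` over a
finite alphabet `A` of size `m`, with `k ∣ n` and `2 ≤ k ≤ (n/100)^{1/3}`, the law
`P_k` of `(X_1,…,X_k)` and the mixture `M_{μ,k}(x_1^k) = ∫ Q^k(x_1^k) dμ(Q)`
(`μ` the law of the empirical measure `P̂_{X_1^n}`) satisfy
`D(P_k‖M_{μ,k}) ≤ 2δ + k e^{−(n/k)δ} (n/k + 1)^{2m^k} log n`,
where `α = [2k/√n·((1+2k)/√n + 1)]^{1/2}` and `δ = α log(m^k/α)`. -/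
theorem finite_de_finetti {A : Type*} [Fintype A]
    (n k : ℕ) (hk2 : 2 ≤ k) (hdvd : k ∣ n) (hkn : k ≤ n)
    (hk3 : (k : ℝ) ≤ ((n : ℝ) / 100) ^ ((1 : ℝ) / 3))
    (p : (Fin n → A) → ℝ) (hp0 : ∀ x, 0 ≤ p x) (hp1 : (∑ x, p x) = 1)
    (hexch : ∀ (π : Equiv.Perm (Fin n)) (x : Fin n → A), p (x ∘ π) = p x)
    (α δ : ℝ)
    (hα : α = Real.sqrt (2 * k / Real.sqrt n * ((1 + 2 * k) / Real.sqrt n + 1)))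
    (hδ : δ = α * Real.log ((Fintype.card A : ℝ) ^ k / α)) :
    relEnt
      (fun a : Fin k → A => ∑ x, if (∀ i : Fin k, x (Fin.castLE hkn i) = a i) then p x else 0)
      (fun a : Fin k → A => ∑ x, p x * ∏ i : Fin k, empPMF n x (a i))
      ≤ 2 * δ + k * Real.exp (-((n : ℝ) / k) * δ) *
          ((n : ℝ) / k + 1) ^ (2 * Fintype.card A ^ k) * Real.log n :=
  finite_de_finetti_general n k hk2 hkn hk3 p hp0 hp1 hexch α δ hα hδ
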